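/- arXiv:1105.2246 — 3 statements merged into one kernel-verified Lean document; each statement's English description precedes it below -/
import Mathlib

section
/- Let I be a finite index set, (r_i)_{i∈I} a family of nonzero integers, and k an integer. Define the Boolean function f : (I → Bool) → Bool by f(v) = true iff ∑_{i∈I} r_i · (if v i then 1 else 0) < k. If p : I →. Bool is a prime implicant of f (a partial valuation with minimal domain such that every total extension of p satisfies f), then for every i in the domain of p: if r_i < 0 then p(i) = true, and if r_i > 0 then p(i) = false. -/
/-- A total valuation `v` extends the partial valuation `p`. -/
def ExtendsPV {I : Type*} (v : I → Bool) (p : I → Option Bool) : Prop :=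
  ∀ i b, p i = some b → v i = b

/-- `q` is a restriction of `p` (defined on a subset of the domain of `p`, agreeing there). -/
def RestrictsPV {I : Type*} (q p : I → Option Bool) : Prop :=
  ∀ i, q i = none ∨ q i = p i

/-- `p` is an implicant of `f`: every total extension of `p` satisfies `f`. -/
def IsImplicant {I : Type*} (f : (I → Bool) → Bool) (p : I → Option Bool) : Prop :=
  ∀ v, ExtendsPV v p → f v = true

/-- `p` is a prime implicant of `f`: an implicant with minimal domain (no proper
restriction is an implicant). -/
def IsPrimeImplicant {I : Type*} (f : (I → Bool) → Bool) (p : I → Option Bool) : Prop :=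
  IsImplicant f p ∧ ∀ q, RestrictsPV q p → IsImplicant f q → q = p

/-!
A literal `p i = some b` of a prime implicant cannot be dropped, so some valuation satisfies `f`
with `v i = b` but not after flipping `v i` to `!b`. For a threshold function this says that
flipping coordinate `i` strictly increases the weighted sum, i.e. `r i * [b] < r i * [!b]`,
which forces `b = true` when `r i < 0` and `b = false` when `r i > 0`.
-/

open Function

theorem ExtendsPV.update_of_update_none {I : Type*} [DecidableEq I] {v : I → Bool}
    {p : I → Option Bool} {i : I} {b : Bool} (hv : ExtendsPV v (update p i none))
    (hpi : p i = some b) : ExtendsPV (update v i b) p := by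
  intro j c hjc
  by_cases hj : j = i
  · subst hj
    rw [hpi, Option.some.injEq] at hjc
    simp [hjc]
  · rw [update_of_ne hj]
    exact hv j c (by rwa [update_of_ne hj])

theorem RestrictsPV.update_none {I : Type*} [DecidableEq I] (p : I → Option Bool) (i : I) :
    RestrictsPV (update p i none) p := by
  intro j
  by_cases hj : j = i
  · left; simp [hj]
  · right; exact update_of_ne hj _ _

theorem IsImplicant.update_none {I : Type*} [DecidableEq I] {f : (I → Bool) → Bool}
    {p : I → Option Bool} {i : I} {b : Bool} (hp : IsImplicant f p) (hpi : p i = some b)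
    (hflip : ∀ v, f (update v i b) = true → f (update v i (!b)) = true) :
    IsImplicant f (update p i none) := by
  intro v hv
  have hb : f (update v i b) = true := hp _ (hv.update_of_update_none hpi)
  rw [← update_eq_self i v]
  rcases Bool.eq_or_eq_not (v i) b with hvi | hvi
  · rwa [hvi]
  · rw [hvi]; exact hflip v hb

theorem IsPrimeImplicant.exists_flip_false {I : Type*} [DecidableEq I] {f : (I → Bool) → Bool}
    {p : I → Option Bool} (hp : IsPrimeImplicant f p) {i : I} {b : Bool} (hpi : p i = some b) :
    ∃ v, f (update v i b) = true ∧ f (update v i (!b)) ≠ true := by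
  by_contra! hflip
  have hdrop := hp.2 _ (RestrictsPV.update_none p i) (hp.1.update_none hpi hflip)
  have := congrFun hdrop i
  simp [hpi] at this

theorem sum_update_le_sum_update {I β M : Type*} [Fintype I] [DecidableEq I]
    [AddCommMonoid M] [PartialOrder M] [IsOrderedAddMonoid M] (g : I → β → M) (v : I → β) {i : I} {c d : β} (h : g i c ≤ g i d) :
    ∑ j, g j (update v i c j) ≤ ∑ j, g j (update v i d j) := by
  refine Finset.sum_le_sum fun j _ => ?_
  by_cases hj : j = i
  · subst hj; simpa using h
  · simp [update_of_ne hj]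

theorem prime_implicant_sign_general {I : Type*} [Fintype I] (r : I → ℤ)
    (k : ℤ) (f : (I → Bool) → Bool)
    (hf : ∀ v, f v = true ↔ (∑ i, r i * (if v i then 1 else 0)) < k)
    (p : I → Option Bool) (hp : IsPrimeImplicant f p) :
    ∀ i b, p i = some b → (r i < 0 → b = true) ∧ (0 < r i → b = false) := by
  classical
  intro i b hpi
  obtain ⟨v, hb, hnb⟩ := hp.exists_flip_false hpi
  rw [hf] at hb
  rw [Ne, hf] at hnb
  have hlt : r i * (if b then 1 else 0) < r i * (if !b then 1 else 0) := by
    by_contra! hle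
    exact hnb ((sum_update_le_sum_update (fun j c => r j * if c then 1 else 0) v hle).trans_lt hb)
  cases b <;> simp at hlt ⊢ <;> omega

theorem prime_implicant_sign {I : Type*} [Fintype I] (r : I → ℤ) (hr : ∀ i, r i ≠ 0)
    (k : ℤ) (f : (I → Bool) → Bool)
    (hf : ∀ v, f v = true ↔ (∑ i, r i * (if v i then 1 else 0)) < k)
    (p : I → Option Bool) (hp : IsPrimeImplicant f p) :
    ∀ i b, p i = some b → (r i < 0 → b = true) ∧ (0 < r i → b = false) :=
  prime_implicant_sign_general r k f hf p hp
end

section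
/- Let T be a monotone Λ-structure (a Set-endofunctor with monotone natural predicate liftings for each operator in Λ). For a finite set V of variables, a set X, a valuation τ : V → 𝒫(X), and a modalised sequent Γ ⊆ (Λ∪Λ̄)(V), if ⟦Γ⟧_{TX,τ} = ∅ then, taking S to be the set of all propositional sequents Δ ⊆ V_Γ with ⟦Δ⟧_{X,τ} = ∅ (where V_Γ is the set of variables occurring in Γ), the rule Γ / S is one-step sound: for every set Y and valuation ρ : V → 𝒫(Y), if ⟦Δ⟧_{Y,ρ} = ∅ for all Δ ∈ S, then ⟦Γ⟧_{TY,ρ} = ∅. -/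
universe u

/-- A modal atom `♡(p₁,…,pₙ)` or its dual `♡̄(p₁,…,pₙ)` over variables `V`. -/
structure MAtom (Λ : Type) (ar : Λ → ℕ) (V : Type) where
  dual : Bool
  op : Λ
  args : Fin (ar op) → V

variable {Λ : Type} {ar : Λ → ℕ} {V : Type}

/-- Interpretation of a modal atom over `T X` given a lifting for each operator
and a valuation `τ`; dual atoms are interpreted by the dual lifting. -/
def AtomSem (T : Type u → Type u)
    (lift : ∀ (l : Λ) (X : Type u), (Fin (ar l) → Set X) → Set (T X))
    (X : Type u) (τ : V → Set X) (a : MAtom Λ ar V) : Set (T X) :=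
  if a.dual then (lift a.op X (fun i => (τ (a.args i))ᶜ))ᶜ
  else lift a.op X (fun i => τ (a.args i))

/-- Interpretation `⟦Γ⟧_{TX,τ}` of a modalised sequent. -/
def SeqSem (T : Type u → Type u)
    (lift : ∀ (l : Λ) (X : Type u), (Fin (ar l) → Set X) → Set (T X))
    (X : Type u) (τ : V → Set X) (Γ : Set (MAtom Λ ar V)) : Set (T X) :=
  ⋂ a ∈ Γ, AtomSem T lift X τ a

/-- The variables occurring in a modalised sequent. -/
def SeqVars (Γ : Set (MAtom Λ ar V)) : Set V :=
  {p | ∃ a ∈ Γ, ∃ i, a.args i = p}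

/-- One-step soundness of the canonical rule `Γ / S` where `S` consists of all
propositional sequents over the variables of `Γ` with empty interpretation. -/
theorem canonical_rule_one_step_sound
    (T : Type u → Type u) (Tmap : ∀ {X Y : Type u}, (X → Y) → T X → T Y)
    (lift : ∀ (l : Λ) (X : Type u), (Fin (ar l) → Set X) → Set (T X))
    (hnat : ∀ (l : Λ) (X Y : Type u) (f : Y → X) (A : Fin (ar l) → Set X),
      Tmap f ⁻¹' lift l X A = lift l Y (fun i => f ⁻¹' A i))
    (hmono : ∀ (l : Λ) (X : Type u) (A B : Fin (ar l) → Set X),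
      (∀ i, A i ⊆ B i) → lift l X A ⊆ lift l X B)
    (V : Type) (Γ : Set (MAtom Λ ar V)) (X : Type u) (τ : V → Set X)
    (hempty : SeqSem T lift X τ Γ = ∅) :
    ∀ (Y : Type u) (ρ : V → Set Y),
      (∀ Δ : Set V, Δ ⊆ SeqVars Γ → (⋂ p ∈ Δ, τ p) = ∅ → (⋂ p ∈ Δ, ρ p) = ∅) →
      SeqSem T lift Y ρ Γ = ∅ := by
  intro Y ρ hS
  rw [Set.eq_empty_iff_forall_notMem]
  intro t ht
  have hex : ∀ y : Y, ∃ x : X, ∀ p ∈ SeqVars Γ, y ∈ ρ p → x ∈ τ p := by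
    intro y
    by_contra h
    push_neg at h
    have hkey := hS {p | p ∈ SeqVars Γ ∧ y ∈ ρ p} (fun p hp => hp.1) ?_
    · have hy : y ∈ ⋂ p ∈ {p | p ∈ SeqVars Γ ∧ y ∈ ρ p}, ρ p := by
        refine Set.mem_iInter₂.mpr fun p hp => hp.2
      rw [hkey] at hy
      exact hy
    · rw [Set.eq_empty_iff_forall_notMem]
      intro x hx
      obtain ⟨p, hp1, hp2, hp3⟩ := h x
      exact hp3 (Set.mem_iInter₂.mp hx p ⟨hp1, hp2⟩)
  choose f hf using hex
  have hsub : ∀ p ∈ SeqVars Γ, ρ p ⊆ f ⁻¹' τ p := fun p hp y hy => hf y p hp hy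
  have hmem : Tmap f t ∈ SeqSem T lift X τ Γ := by
    refine Set.mem_iInter₂.mpr fun a ha => ?_
    have hargs : ∀ i, (a.args i) ∈ SeqVars Γ := fun i => ⟨a, ha, i, rfl⟩
    have hta := Set.mem_iInter₂.mp ht a ha
    unfold AtomSem at hta ⊢
    by_cases hd : a.dual
    · simp only [hd, if_true] at hta ⊢
      intro hm
      apply hta
      have h2 : t ∈ lift a.op Y fun i => f ⁻¹' (τ (a.args i))ᶜ := by
        rw [← hnat]
        exact hm
      refine hmono a.op Y _ _ ?_ h2
      intro i x hx hx2
      exact hx (hsub _ (hargs i) hx2)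
    · simp only [hd, Bool.false_eq_true, if_false] at hta ⊢
      rw [← Set.mem_preimage, hnat]
      exact hmono a.op Y _ _ (fun i => hsub _ (hargs i)) hta
  rw [hempty] at hmem
  exact hmem
end

section
/- Every monotone Λ-structure T admits a set R of monotone one-step tableau rules that is both one-step tableau sound and one-step tableau complete with respect to T; moreover R can be chosen closed under contraction. -/
universe u

variable {Λ : Type} {ar : Λ → ℕ} {V : Type}

open scoped Classical

/-- A one-step tableau rule: a premise of modal atoms over variables `ℕ`
and a finite list of propositional conclusions. -/
structure OneStepRule (Λ : Type) (ar : Λ → ℕ) where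
  prem : Finset (MAtom Λ ar ℕ)
  concl : List (Finset ℕ)

/-- Apply a renaming to a modal atom. -/
def MAtom.rename (σ : ℕ → ℕ) (a : MAtom Λ ar ℕ) : MAtom Λ ar ℕ :=
  ⟨a.dual, a.op, σ ∘ a.args⟩

/-- A rule is a monotone one-step tableau rule: no negated variables (built into
`MAtom`-sequents of variables), every variable occurs at most once in the premise,
and all conclusion variables occur in the premise. -/
def MonotoneRule (r : OneStepRule Λ ar) : Prop :=
  (r.prem.val.bind (fun a => ((List.ofFn a.args : List ℕ) : Multiset ℕ))).Nodup ∧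
  ∀ Δ ∈ r.concl, ∀ p ∈ Δ, p ∈ SeqVars (↑r.prem : Set (MAtom Λ ar ℕ))

/-- One-step tableau soundness of a rule set for the structure `(T, lift)`. -/
def OneStepTabSound (T : Type u → Type u)
    (lift : ∀ (l : Λ) (X : Type u), (Fin (ar l) → Set X) → Set (T X))
    (R : Set (OneStepRule Λ ar)) : Prop :=
  ∀ (X : Type u) (τ : ℕ → Set X) (Γ : Finset (MAtom Λ ar ℕ)),
    SeqSem T lift X τ (↑Γ : Set (MAtom Λ ar ℕ)) ≠ ∅ →
    ∀ r ∈ R, ∀ σ : ℕ → ℕ, r.prem.image (MAtom.rename σ) ⊆ Γ →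
      ∃ Δ ∈ r.concl, (⋂ p ∈ Δ, τ (σ p)) ≠ ∅

/-- One-step tableau completeness of a rule set for the structure `(T, lift)`. -/
def OneStepTabComplete (T : Type u → Type u)
    (lift : ∀ (l : Λ) (X : Type u), (Fin (ar l) → Set X) → Set (T X))
    (R : Set (OneStepRule Λ ar)) : Prop :=
  ∀ (X : Type u) (τ : ℕ → Set X) (Γ : Finset (MAtom Λ ar ℕ)),
    (∀ r ∈ R, ∀ σ : ℕ → ℕ, r.prem.image (MAtom.rename σ) ⊆ Γ →
      ∃ Δ ∈ r.concl, (⋂ p ∈ Δ, τ (σ p)) ≠ ∅) →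
    SeqSem T lift X τ (↑Γ : Set (MAtom Λ ar ℕ)) ≠ ∅

/-- Closure under contraction: every instance of a rule under an identifying
renaming can be replaced by a non-identifying instance of another rule whose
premise is contained in the original instantiated premise and whose conclusions
contain the original ones. -/
def ContractionClosed (R : Set (OneStepRule Λ ar)) : Prop :=
  ∀ r ∈ R, ∀ σ : ℕ → ℕ, ∃ r' ∈ R, ∃ τ' : ℕ → ℕ,
    (∀ a ∈ r'.prem, ∀ b ∈ r'.prem, MAtom.rename τ' a = MAtom.rename τ' b → a = b) ∧
    r'.prem.image (MAtom.rename τ') ⊆ r.prem.image (MAtom.rename σ) ∧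
    ∀ Δ ∈ r.concl, ∃ Δ' ∈ r'.concl, Δ.image σ ⊆ Δ'.image τ'

/-!
Take `R` to be all monotone rules that are sound in every model; one-step soundness is then
immediate. If `Γ` is unsatisfiable under `τ`, consider the rule whose premise is a linear copy
of `Γ` and whose conclusions are the sets of its variables that are jointly `τ`-unsatisfiable.
It is sound: if `t` satisfied its premise under `ρ` while every conclusion failed, then every
`y` would have a `τ`-satisfiable type `{q | y ∈ ρ q}`, and pushing `t` along a choice `f` of
witnesses would, by naturality and monotonicity of the liftings, land in `⟦Γ⟧_τ = ∅`.
Instantiated back onto `Γ`, this rule refutes `Γ`. For contraction closure, an instance `r σ`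
is replaced by the linear copy of `r.prem σ`, onto which the linear premise of `r` can be renamed.
-/

section Semantics

variable {T : Type u → Type u} {lift : ∀ (l : Λ) (X : Type u), (Fin (ar l) → Set X) → Set (T X)}
  {X : Type u}

lemma seqSem_antitone {τ : V → Set X} {S S' : Set (MAtom Λ ar V)} (h : S ⊆ S') :
    SeqSem T lift X τ S' ⊆ SeqSem T lift X τ S :=
  Set.biInter_subset_biInter_left h

lemma seqSem_image_rename (τ : ℕ → Set X) (σ : ℕ → ℕ) (S : Set (MAtom Λ ar ℕ)) :
    SeqSem T lift X τ (MAtom.rename σ '' S) = SeqSem T lift X (τ ∘ σ) S :=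
  Set.biInter_image

lemma seqSem_comp_ne_empty {τ : ℕ → Set X} {σ : ℕ → ℕ} {P Γ : Finset (MAtom Λ ar ℕ)}
    (hP : P.image (MAtom.rename σ) ⊆ Γ) (hΓ : SeqSem T lift X τ ↑Γ ≠ ∅) :
    SeqSem T lift X (τ ∘ σ) ↑P ≠ ∅ := by
  rw [← seqSem_image_rename, ← Finset.coe_image]
  exact fun h => hΓ (Set.subset_empty_iff.mp (h ▸ seqSem_antitone (Finset.coe_subset.mpr hP)))

lemma atomSem_subset_preimage (Tmap : ∀ {X Y : Type u}, (X → Y) → T X → T Y)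
    (hnat : ∀ (l : Λ) (X Y : Type u) (f : Y → X) (A : Fin (ar l) → Set X),
      Tmap f ⁻¹' lift l X A = lift l Y (fun i => f ⁻¹' A i))
    (hmono : ∀ (l : Λ) (X : Type u) (A B : Fin (ar l) → Set X),
      (∀ i, A i ⊆ B i) → lift l X A ⊆ lift l X B)
    {Y : Type u} {τ : V → Set X} {ρ : V → Set Y} (f : Y → X)
    (a : MAtom Λ ar V) (h : ∀ i, ρ (a.args i) ⊆ f ⁻¹' τ (a.args i)) :
    AtomSem T lift Y ρ a ⊆ Tmap f ⁻¹' AtomSem T lift X τ a := by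
  unfold AtomSem
  split_ifs
  · rw [Set.preimage_compl, hnat]
    exact Set.compl_subset_compl.mpr
      (hmono _ _ _ _ fun i => by rw [Set.preimage_compl]; exact Set.compl_subset_compl.mpr (h i))
  · rw [hnat]
    exact hmono _ _ _ _ h

def RuleSound (T : Type u → Type u)
    (lift : ∀ (l : Λ) (X : Type u), (Fin (ar l) → Set X) → Set (T X))
    (r : OneStepRule Λ ar) : Prop :=
  ∀ (X : Type u) (ρ : ℕ → Set X), SeqSem T lift X ρ ↑r.prem ≠ ∅ →
    ∃ Δ ∈ r.concl, (⋂ p ∈ Δ, ρ p) ≠ ∅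

def premVars (P : Finset (MAtom Λ ar ℕ)) : Finset ℕ :=
  P.biUnion fun a => Finset.univ.image a.args

lemma mem_premVars {P : Finset (MAtom Λ ar ℕ)} {q : ℕ} :
    q ∈ premVars P ↔ q ∈ SeqVars (↑P : Set (MAtom Λ ar ℕ)) := by
  simp [premVars, SeqVars]

noncomputable def refutationRule (P : Finset (MAtom Λ ar ℕ)) (τ : ℕ → Set X) :
    OneStepRule Λ ar :=
  ⟨P, ((premVars P).powerset.filter fun Δ => (⋂ p ∈ Δ, τ p) = ∅).toList⟩

lemma mem_refutationRule_concl {P : Finset (MAtom Λ ar ℕ)} {τ : ℕ → Set X} {Δ : Finset ℕ} :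
    Δ ∈ (refutationRule P τ).concl ↔ Δ ⊆ premVars P ∧ (⋂ p ∈ Δ, τ p) = ∅ := by
  simp [refutationRule]

lemma ruleSound_refutationRule (Tmap : ∀ {X Y : Type u}, (X → Y) → T X → T Y)
    (hnat : ∀ (l : Λ) (X Y : Type u) (f : Y → X) (A : Fin (ar l) → Set X),
      Tmap f ⁻¹' lift l X A = lift l Y (fun i => f ⁻¹' A i))
    (hmono : ∀ (l : Λ) (X : Type u) (A B : Fin (ar l) → Set X),
      (∀ i, A i ⊆ B i) → lift l X A ⊆ lift l X B)
    {P : Finset (MAtom Λ ar ℕ)} {τ : ℕ → Set X} (hP : SeqSem T lift X τ ↑P = ∅) :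
    RuleSound T lift (refutationRule P τ) := by
  intro Y ρ hne
  by_contra! hcon
  obtain ⟨t, ht⟩ := Set.nonempty_iff_ne_empty.mpr hne
  have htype : ∀ y : Y, (⋂ p ∈ (premVars P).filter (y ∈ ρ ·), τ p).Nonempty := by
    refine fun y => Set.nonempty_iff_ne_empty.mpr fun hemp => ?_
    have hy : y ∈ ⋂ p ∈ (premVars P).filter (y ∈ ρ ·), ρ p :=
      Set.mem_iInter₂.mpr fun p hp => (Finset.mem_filter.mp hp).2
    rwa [hcon _ (mem_refutationRule_concl.mpr ⟨Finset.filter_subset _ _, hemp⟩)] at hy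
  choose f hf using htype
  have hρ : ∀ q ∈ premVars P, ρ q ⊆ f ⁻¹' τ q := fun q hq y hy =>
    Set.mem_iInter₂.mp (hf y) q (Finset.mem_filter.mpr ⟨hq, hy⟩)
  have hft : Tmap f t ∈ SeqSem T lift X τ ↑P := Set.mem_iInter₂.mpr fun a ha =>
    atomSem_subset_preimage Tmap hnat hmono f a
      (fun i => hρ _ (mem_premVars.mpr ⟨a, ha, i, rfl⟩)) (Set.mem_iInter₂.mp ht a ha)
  rwa [hP] at hft

lemma RuleSound.rename {r : OneStepRule Λ ar} (hr : RuleSound T lift r) {g : ℕ → ℕ}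
    {P : Finset (MAtom Λ ar ℕ)} (hg : r.prem.image (MAtom.rename g) ⊆ P) :
    RuleSound T lift ⟨P, r.concl.map (Finset.image g)⟩ := by
  intro X ρ hne
  obtain ⟨Δ, hΔ, hsat⟩ := hr X (ρ ∘ g) (seqSem_comp_ne_empty hg hne)
  refine ⟨Δ.image g, List.mem_map_of_mem hΔ, ?_⟩
  rwa [Finset.set_biInter_finset_image]

end Semantics

section Linear

def IsLinearPrem (P : Finset (MAtom Λ ar ℕ)) : Prop :=
  (P.val.bind fun a => ((List.ofFn a.args : List ℕ) : Multiset ℕ)).Nodup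

lemma isLinearPrem_iff {P : Finset (MAtom Λ ar ℕ)} :
    IsLinearPrem P ↔ (∀ a ∈ P, Function.Injective a.args) ∧
      ∀ a ∈ P, ∀ b ∈ P, ∀ i j, a.args i = b.args j → a = b := by
  have : Std.Symm (Function.onFun Disjoint
      fun a : MAtom Λ ar ℕ => ((List.ofFn a.args : List ℕ) : Multiset ℕ)) :=
    ⟨fun _ _ h => Disjoint.symm h⟩
  simp only [IsLinearPrem, Multiset.nodup_bind, Multiset.coe_nodup, List.nodup_ofFn,
    Finset.mem_val]
  refine and_congr_right fun _ => ⟨fun h a ha b hb i j hij => ?_, fun h => ?_⟩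
  · by_contra hab
    exact Multiset.disjoint_left.mp (h.forall ha hb hab)
      (Multiset.mem_coe.mpr (List.mem_ofFn.mpr ⟨i, rfl⟩))
      (Multiset.mem_coe.mpr (List.mem_ofFn.mpr ⟨j, hij.symm⟩))
  · refine P.nodup.pairwise fun a ha b hb hab => Multiset.disjoint_left.mpr fun hx hx' => ?_
    obtain ⟨i, rfl⟩ := List.mem_ofFn.mp (Multiset.mem_coe.mp hx)
    obtain ⟨j, hj⟩ := List.mem_ofFn.mp (Multiset.mem_coe.mp hx')
    exact hab (h a ha b hb i j hj.symm)

lemma IsLinearPrem.exists_rename {P : Finset (MAtom Λ ar ℕ)} (hP : IsLinearPrem P)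
    (F : (a : MAtom Λ ar ℕ) → Fin (ar a.op) → ℕ) :
    ∃ g : ℕ → ℕ, ∀ a ∈ P, ∀ i, g (a.args i) = F a i := by
  obtain ⟨hinj, huniq⟩ := isLinearPrem_iff.mp hP
  refine ⟨fun p => if h : ∃ a ∈ P, ∃ i, a.args i = p then F h.choose h.choose_spec.2.choose
    else 0, fun a ha i => ?_⟩
  have h : ∃ b ∈ P, ∃ j, b.args j = a.args i := ⟨a, ha, i, rfl⟩
  simp only [dif_pos h]
  obtain ⟨hb, hj⟩ := h.choose_spec
  generalize h.choose = b at hb hj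
  obtain rfl := huniq _ hb _ ha _ _ hj.choose_spec
  exact congrArg (F b) (hinj b hb hj.choose_spec)

end Linear

section Freshening

variable (P : Finset (MAtom Λ ar ℕ))

noncomputable def freshen (b : MAtom Λ ar ℕ) : MAtom Λ ar ℕ :=
  ⟨b.dual, b.op, fun i => Nat.pair (P.toList.idxOf b) i⟩

noncomputable def unfreshen (p : ℕ) : ℕ :=
  ((P.toList[p.unpair.1]?).map fun b =>
    if h : p.unpair.2 < ar b.op then b.args ⟨p.unpair.2, h⟩ else 0).getD 0

noncomputable def freshPrem : Finset (MAtom Λ ar ℕ) :=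
  P.image (freshen P)

variable {P}

lemma unfreshen_freshen_args {b : MAtom Λ ar ℕ} (hb : b ∈ P) (i : Fin (ar b.op)) :
    unfreshen P ((freshen P b).args i) = b.args i := by
  simp [unfreshen, freshen, List.getElem?_idxOf (Finset.mem_toList.mpr hb)]

lemma rename_unfreshen_freshen {b : MAtom Λ ar ℕ} (hb : b ∈ P) :
    (freshen P b).rename (unfreshen P) = b := by
  obtain ⟨d, o, f⟩ := b
  exact congrArg (MAtom.mk d o) (funext (unfreshen_freshen_args hb))

lemma image_rename_unfreshen_freshPrem :
    (freshPrem P).image (MAtom.rename (unfreshen P)) = P := by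
  rw [freshPrem, Finset.image_image]
  exact (Finset.image_congr fun b hb => rename_unfreshen_freshen hb).trans Finset.image_id'

lemma injOn_rename_unfreshen :
    Set.InjOn (MAtom.rename (unfreshen P)) (freshPrem P : Set (MAtom Λ ar ℕ)) := by
  rw [freshPrem, Finset.coe_image]
  rintro _ ⟨a, ha, rfl⟩ _ ⟨b, hb, rfl⟩ h
  rw [rename_unfreshen_freshen ha, rename_unfreshen_freshen hb] at h
  rw [h]

lemma isLinearPrem_freshPrem : IsLinearPrem (freshPrem P) := by
  simp only [isLinearPrem_iff, freshPrem, Finset.mem_image, forall_exists_index, and_imp,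
    forall_apply_eq_imp_iff₂]
  refine ⟨fun b _ i j h => Fin.ext (Nat.pair_eq_pair.mp h).2, fun a ha b _ i j h => ?_⟩
  rw [(List.idxOf_inj (Finset.mem_toList.mpr ha)).mp (Nat.pair_eq_pair.mp h).1]

lemma seqSem_freshPrem {T : Type u → Type u}
    {lift : ∀ (l : Λ) (X : Type u), (Fin (ar l) → Set X) → Set (T X)} {X : Type u}
    (τ : ℕ → Set X) :
    SeqSem T lift X (τ ∘ unfreshen P) ↑(freshPrem P) = SeqSem T lift X τ ↑P := by
  rw [← seqSem_image_rename, ← Finset.coe_image, image_rename_unfreshen_freshPrem]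

end Freshening

section RuleSet

variable {T : Type u → Type u} {lift : ∀ (l : Λ) (X : Type u), (Fin (ar l) → Set X) → Set (T X)}

def soundMonotoneRules (T : Type u → Type u)
    (lift : ∀ (l : Λ) (X : Type u), (Fin (ar l) → Set X) → Set (T X)) :
    Set (OneStepRule Λ ar) :=
  {r | MonotoneRule r ∧ RuleSound T lift r}

lemma monotoneRule_refutationRule {X : Type u} {P : Finset (MAtom Λ ar ℕ)} (hP : IsLinearPrem P)
    (τ : ℕ → Set X) : MonotoneRule (refutationRule P τ) :=
  ⟨hP, fun _ hΔ _ hp => mem_premVars.mp ((mem_refutationRule_concl.mp hΔ).1 hp)⟩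

lemma rename_mem_soundMonotoneRules {r : OneStepRule Λ ar} (hr : r ∈ soundMonotoneRules T lift)
    {g : ℕ → ℕ} {P : Finset (MAtom Λ ar ℕ)} (hP : IsLinearPrem P)
    (hg : r.prem.image (MAtom.rename g) ⊆ P) :
    ⟨P, r.concl.map (Finset.image g)⟩ ∈ soundMonotoneRules T lift := by
  obtain ⟨⟨-, hvars⟩, hsound⟩ := hr
  refine ⟨⟨hP, ?_⟩, hsound.rename hg⟩
  simp only [List.mem_map]
  rintro _ ⟨Δ, hΔ, rfl⟩ q hq
  obtain ⟨p, hp, rfl⟩ := Finset.mem_image.mp hq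
  obtain ⟨a, ha, i, rfl⟩ := hvars Δ hΔ p hp
  exact ⟨a.rename g, hg (Finset.mem_image_of_mem _ ha), i, rfl⟩

theorem oneStepTabSound_soundMonotoneRules :
    OneStepTabSound T lift (soundMonotoneRules T lift) :=
  fun X τ _ hΓ _ hr σ hσ => hr.2 X (τ ∘ σ) (seqSem_comp_ne_empty hσ hΓ)

theorem oneStepTabComplete_soundMonotoneRules (Tmap : ∀ {X Y : Type u}, (X → Y) → T X → T Y)
    (hnat : ∀ (l : Λ) (X Y : Type u) (f : Y → X) (A : Fin (ar l) → Set X),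
      Tmap f ⁻¹' lift l X A = lift l Y (fun i => f ⁻¹' A i))
    (hmono : ∀ (l : Λ) (X : Type u) (A B : Fin (ar l) → Set X),
      (∀ i, A i ⊆ B i) → lift l X A ⊆ lift l X B) :
    OneStepTabComplete T lift (soundMonotoneRules T lift) := by
  intro X τ Γ H hΓ
  have hr : refutationRule (freshPrem Γ) (τ ∘ unfreshen Γ) ∈ soundMonotoneRules T lift :=
    ⟨monotoneRule_refutationRule isLinearPrem_freshPrem _,
      ruleSound_refutationRule Tmap hnat hmono (by rwa [seqSem_freshPrem])⟩
  obtain ⟨Δ, hΔ, hsat⟩ := H _ hr (unfreshen Γ) image_rename_unfreshen_freshPrem.subset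
  exact hsat (mem_refutationRule_concl.mp hΔ).2

theorem contractionClosed_soundMonotoneRules :
    ContractionClosed (soundMonotoneRules T lift) := by
  intro r hr σ
  set P := r.prem.image (MAtom.rename σ)
  have hlin : IsLinearPrem r.prem := hr.1.1
  have hvars := hr.1.2
  obtain ⟨g, hg⟩ := hlin.exists_rename fun a i => (freshen P (a.rename σ)).args i
  have hgP : r.prem.image (MAtom.rename g) ⊆ freshPrem P := by
    refine Finset.image_subset_iff.mpr fun a ha => ?_
    have hga : a.rename g = freshen P (a.rename σ) :=
      congrArg (MAtom.mk a.dual a.op) (funext (hg a ha))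
    exact hga ▸ Finset.mem_image_of_mem _ (Finset.mem_image_of_mem _ ha)
  refine ⟨_, rename_mem_soundMonotoneRules hr isLinearPrem_freshPrem hgP, unfreshen P,
    fun a ha b hb => injOn_rename_unfreshen ha hb, image_rename_unfreshen_freshPrem.subset,
    fun Δ hΔ => ⟨Δ.image g, List.mem_map_of_mem hΔ, ?_⟩⟩
  rw [Finset.image_image]
  refine (Finset.image_congr fun p hp => ?_).subset
  obtain ⟨a, ha, i, rfl⟩ := hvars Δ hΔ p hp
  rw [Function.comp_apply, hg a ha i]
  exact (unfreshen_freshen_args (Finset.mem_image_of_mem (MAtom.rename σ) ha) i).symm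

end RuleSet

/-- Every monotone `Λ`-structure admits a one-step tableau sound and complete set
of monotone one-step tableau rules, which may moreover be chosen contraction closed. -/
theorem exists_sound_complete_rule_set
    (T : Type u → Type u) (Tmap : ∀ {X Y : Type u}, (X → Y) → T X → T Y)
    (lift : ∀ (l : Λ) (X : Type u), (Fin (ar l) → Set X) → Set (T X))
    (hnat : ∀ (l : Λ) (X Y : Type u) (f : Y → X) (A : Fin (ar l) → Set X),
      Tmap f ⁻¹' lift l X A = lift l Y (fun i => f ⁻¹' A i))
    (hmono : ∀ (l : Λ) (X : Type u) (A B : Fin (ar l) → Set X),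
      (∀ i, A i ⊆ B i) → lift l X A ⊆ lift l X B) :
    ∃ R : Set (OneStepRule Λ ar), (∀ r ∈ R, MonotoneRule r) ∧
      OneStepTabSound T lift R ∧ OneStepTabComplete T lift R ∧
      ContractionClosed R :=
  ⟨soundMonotoneRules T lift, fun _ hr => hr.1, oneStepTabSound_soundMonotoneRules,
    oneStepTabComplete_soundMonotoneRules Tmap hnat hmono, contractionClosed_soundMonotoneRules⟩
end
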